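/- arXiv:1810.06367 — 6 statements merged into one kernel-verified Lean document; each statement's English description precedes it below -/
import Mathlib

section
/- Let a, b be integers. Then the three conditions (i) a < 0 or a + b < 0, (ii) a > −4 or a + b > −2, and (iii) (a+1)(a+2)(a+3) + b(b−1)(b−2) = 0 hold simultaneously if and only if P₁(a,b) holds, i.e. if and only if a + b = −1, or (a,b) is one of the six pairs (−1,1), (−1,2), (−2,0), (−2,2), (−3,0), (−3,1). -/
/-- `P₁ (a, b)` : the condition characterizing cohomologically zero line bundles
`O_X(aH + bE)` on the blow-up of `ℙ³` at a point. -/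
def P₁ (D : ℤ × ℤ) : Prop :=
  D.1 + D.2 = -1 ∨
    D = (-1, 1) ∨ D = (-1, 2) ∨ D = (-2, 0) ∨ D = (-2, 2) ∨ D = (-3, 0) ∨ D = (-3, 1)

theorem stmt_0 (a b : ℤ) :
    ((a < 0 ∨ a + b < 0) ∧ (a > -4 ∨ a + b > -2) ∧
      (a + 1) * (a + 2) * (a + 3) + b * (b - 1) * (b - 2) = 0) ↔ P₁ (a, b) := by
  constructor
  · rintro ⟨-, -, h3⟩
    have hfac : (a + b + 1) * (a ^ 2 + (5 - b) * a + b ^ 2 - 4 * b + 6) = 0 := by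
      linear_combination h3
    rcases mul_eq_zero.mp hfac with h | h
    · exact Or.inl (by omega)
    · have hb : 0 ≤ b ∧ b ≤ 2 := by
        constructor <;> nlinarith [sq_nonneg (2 * a + 5 - b), sq_nonneg (b - 1)]
      have ha : -3 ≤ a ∧ a ≤ -1 := by
        constructor <;> nlinarith [sq_nonneg (b - 1), sq_nonneg (b - 2), sq_nonneg b]
      unfold P₁
      simp only [Prod.mk.injEq]
      obtain ⟨hb0, hb2⟩ := hb
      obtain ⟨ha0, ha2⟩ := ha
      interval_cases a <;> interval_cases b <;> omega
  · intro hp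
    rcases hp with h | h | h | h | h | h | h
    · simp only at h
      refine ⟨by omega, by omega, ?_⟩
      linear_combination (a ^ 2 + (5 - b) * a + b ^ 2 - 4 * b + 6) * h
    all_goals (obtain ⟨ha, hb⟩ := Prod.mk.injEq .. ▸ h; subst ha; subst hb; norm_num)
end

section
/- The integer solutions (x, y) of the equation x(x+1)(x+2) = y(y+1)(y+2) with x ≠ y are exactly the six pairs (0,−1), (0,−2), (−1,0), (−1,−2), (−2,0), (−2,−1). -/
theorem stmt_1 (x y : ℤ) :
    (x * (x + 1) * (x + 2) = y * (y + 1) * (y + 2) ∧ x ≠ y) ↔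
      ((x, y) = (0, -1) ∨ (x, y) = (0, -2) ∨ (x, y) = (-1, 0) ∨
        (x, y) = (-1, -2) ∨ (x, y) = (-2, 0) ∨ (x, y) = (-2, -1)) := by
  constructor
  · rintro ⟨h, hne⟩
    have hd : x - y ≠ 0 := sub_ne_zero.mpr hne
    have hmul : (x - y) * (x ^ 2 + x * y + y ^ 2 + 3 * x + 3 * y + 2) = 0 := by
      linear_combination h
    have key : x ^ 2 + x * y + y ^ 2 + 3 * x + 3 * y + 2 = 0 :=
      (mul_eq_zero.mp hmul).resolve_left hd
    have hx1 : -6 ≤ x := by nlinarith [sq_nonneg (x + y), sq_nonneg (y + 3)]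
    have hx2 : x ≤ 0 := by nlinarith [sq_nonneg (x + y), sq_nonneg (y + 3)]
    have hy1 : -6 ≤ y := by nlinarith [sq_nonneg (x + y), sq_nonneg (x + 3)]
    have hy2 : y ≤ 0 := by nlinarith [sq_nonneg (x + y), sq_nonneg (x + 3)]
    simp only [Prod.mk.injEq]
    interval_cases x <;> interval_cases y <;> omega
  · rintro (h | h | h | h | h | h) <;>
      obtain ⟨hx, hy⟩ := Prod.mk.injEq .. ▸ h <;> subst hx <;> subst hy <;>
      exact ⟨by ring, by decide⟩
end

section
/- Let a, b be integers. Then the three conditions (i) a < 0 or a + b < 0, (ii) a > −4 or a + b > −3, and (iii) (a−2b+3)(a+b+1)(a+b+2) = 0 hold simultaneously if and only if P₂(a,b) holds, i.e. if and only if a + b = −1, or a + b = −2, or (a,b) = (−1,1), or (a,b) = (−3,0). -/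
/-- `P₂ (a, b)` : the condition characterizing cohomologically zero line bundles
`O_X(aH + bE)` on the blow-up of `ℙ³` at a line. -/
def P₂ (D : ℤ × ℤ) : Prop :=
  D.1 + D.2 = -1 ∨ D.1 + D.2 = -2 ∨ D = (-1, 1) ∨ D = (-3, 0)

theorem stmt_5 (a b : ℤ) :
    ((a < 0 ∨ a + b < 0) ∧ (a > -4 ∨ a + b > -3) ∧
      (a - 2 * b + 3) * (a + b + 1) * (a + b + 2) = 0) ↔ P₂ (a, b) := by
  simp only [P₂, Prod.mk.injEq, mul_eq_zero]
  constructor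
  · rintro ⟨h1, h2, (h | h) | h⟩ <;> omega
  · rintro (h | h | ⟨h1, h2⟩ | ⟨h1, h2⟩) <;> omega
end

section
/- Let D₁, …, D₅ ∈ ℤ × ℤ and set D₀ = (0,0). Then P₂(D_j − D_i) holds (with pairs subtracted componentwise) for all 0 ≤ j < i ≤ 5 if and only if the ordered tuple (D₁, …, D₅) is one of the following, for some integers a and b: (1)_{a,b}: (a,1−a), (a+1,−a), (b,2−b), (b+1,1−b), (3,0); or (2)_{a,b}: (1,−1), (a,1−a), (a+1,−a), (b,2−b), (b+1,1−b). -/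
/-- Canonical arithmetic form of `P₂ ((p,q) - (x,y))`. -/
def Can (p q x y : ℤ) : Prop :=
  (x + y = p + q ∧ x = p + 1 ∧ y = q - 1) ∨
    (p + q + 1 ≤ x + y ∧ x + y ≤ p + q + 2) ∨
      (x + y = p + q + 3 ∧ x = p + 3 ∧ y = q)

lemma P₂_canon {p q x y : ℤ} (h : P₂ ((p, q) - (x, y))) : Can p q x y := by
  simp only [P₂, Prod.mk_sub_mk, Prod.mk.injEq] at h
  unfold Can
  omega

lemma Can.bound {p q x y : ℤ} (h : Can p q x y) :
    p + q ≤ x + y ∧ x + y ≤ p + q + 3 := by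
  unfold Can at h; omega

lemma Can.zero {p q x y : ℤ} (h : Can p q x y) (e : x + y = p + q) :
    x = p + 1 ∧ y = q - 1 := by
  unfold Can at h; omega

lemma Can.three {p q x y : ℤ} (h : Can p q x y) (e : x + y = p + q + 3) :
    x = p + 3 ∧ y = q := by
  unfold Can at h; omega

lemma no_triple {p q x y u v : ℤ} (h1 : Can p q x y) (h2 : Can x y u v)
    (h3 : Can p q u v) (e1 : x + y = p + q) (e2 : u + v = x + y) : False := by
  unfold Can at h1 h2 h3; omega

lemma no_far {a b c d : ℤ} (h1 : Can 0 0 a b) (h2 : Can a b c d)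
    (h3 : Can 0 0 c d) (e1 : a + b = 0) (e2 : c + d = 3) : False := by
  unfold Can at h1 h2 h3; omega

lemma no_two_far {a b c d : ℤ} (h1 : Can 0 0 a b) (h2 : Can 0 0 c d)
    (h3 : Can a b c d) (e1 : a + b = 3) (e2 : c + d = 3) : False := by
  unfold Can at h1 h2 h3; omega

theorem stmt_6 (D₁ D₂ D₃ D₄ D₅ : ℤ × ℤ) :
    (∀ i j : Fin 6, j < i →
        P₂ (![((0 : ℤ), (0 : ℤ)), D₁, D₂, D₃, D₄, D₅] j -
            ![((0 : ℤ), (0 : ℤ)), D₁, D₂, D₃, D₄, D₅] i)) ↔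
      ((∃ a b : ℤ, (D₁, D₂, D₃, D₄, D₅) =
          ((a, 1 - a), (a + 1, -a), (b, 2 - b), (b + 1, 1 - b), (3, 0))) ∨
       (∃ a b : ℤ, (D₁, D₂, D₃, D₄, D₅) =
          ((1, -1), (a, 1 - a), (a + 1, -a), (b, 2 - b), (b + 1, 1 - b)))) := by
  obtain ⟨x₁, y₁⟩ := D₁
  obtain ⟨x₂, y₂⟩ := D₂
  obtain ⟨x₃, y₃⟩ := D₃
  obtain ⟨x₄, y₄⟩ := D₄
  obtain ⟨x₅, y₅⟩ := D₅
  constructor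
  · intro h
    have H01 : Can 0 0 x₁ y₁ := P₂_canon (h 1 0 (by decide))
    have H02 : Can 0 0 x₂ y₂ := P₂_canon (h 2 0 (by decide))
    have H04 : Can 0 0 x₄ y₄ := P₂_canon (h 4 0 (by decide))
    have H05 : Can 0 0 x₅ y₅ := P₂_canon (h 5 0 (by decide))
    have H12 : Can x₁ y₁ x₂ y₂ := P₂_canon (h 2 1 (by decide))
    have H13 : Can x₁ y₁ x₃ y₃ := P₂_canon (h 3 1 (by decide))
    have H15 : Can x₁ y₁ x₅ y₅ := P₂_canon (h 5 1 (by decide))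
    have H23 : Can x₂ y₂ x₃ y₃ := P₂_canon (h 3 2 (by decide))
    have H24 : Can x₂ y₂ x₄ y₄ := P₂_canon (h 4 2 (by decide))
    have H34 : Can x₃ y₃ x₄ y₄ := P₂_canon (h 4 3 (by decide))
    have H35 : Can x₃ y₃ x₅ y₅ := P₂_canon (h 5 3 (by decide))
    have H45 : Can x₄ y₄ x₅ y₅ := P₂_canon (h 5 4 (by decide))
    clear h
    -- ordering bounds on the sums
    have B01 := H01.bound
    have B05 := H05.bound
    have B12 := H12.bound
    have B23 := H23.bound
    have B34 := H34.bound
    have B45 := H45.bound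
    -- at most two consecutive equal sums
    have n012 : ¬(x₁ + y₁ = 0 ∧ x₂ + y₂ = x₁ + y₁) := by
      rintro ⟨e1, e2⟩
      exact no_triple H01 H12 H02 (by omega) (by omega)
    have n123 : ¬(x₂ + y₂ = x₁ + y₁ ∧ x₃ + y₃ = x₂ + y₂) := by
      rintro ⟨e1, e2⟩
      exact no_triple H12 H23 H13 (by omega) (by omega)
    have n234 : ¬(x₃ + y₃ = x₂ + y₂ ∧ x₄ + y₄ = x₃ + y₃) := by
      rintro ⟨e1, e2⟩
      exact no_triple H23 H34 H24 (by omega) (by omega)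
    have n345 : ¬(x₄ + y₄ = x₃ + y₃ ∧ x₅ + y₅ = x₄ + y₄) := by
      rintro ⟨e1, e2⟩
      exact no_triple H34 H45 H35 (by omega) (by omega)
    -- exclusions for the extreme levels
    have eA : ¬(x₁ + y₁ = 0 ∧ x₅ + y₅ = 3) := by
      rintro ⟨e1, e2⟩
      exact no_far H01 H15 H05 e1 e2
    have eB : ¬(x₄ + y₄ = 3 ∧ x₅ + y₅ = 3) := by
      rintro ⟨e1, e2⟩
      exact no_two_far H04 H05 H45 e1 e2
    by_cases ht : x₅ + y₅ = 3
    · -- family (1)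
      have hts : x₁ + y₁ = 1 ∧ x₂ + y₂ = 1 ∧ x₃ + y₃ = 2 ∧ x₄ + y₄ = 2 := by omega
      obtain ⟨t1, t2, t3, t4⟩ := hts
      obtain ⟨z1, z2⟩ := H12.zero (by omega)
      obtain ⟨z3, z4⟩ := H34.zero (by omega)
      obtain ⟨w1, w2⟩ := H05.three (by omega)
      left
      refine ⟨x₁, x₃, ?_⟩
      simp only [Prod.mk.injEq, true_and]
      omega
    · -- family (2)
      have hts : x₁ + y₁ = 0 ∧ x₂ + y₂ = 1 ∧ x₃ + y₃ = 1 ∧ x₄ + y₄ = 2 ∧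
          x₅ + y₅ = 2 := by omega
      obtain ⟨t1, t2, t3, t4, t5⟩ := hts
      obtain ⟨z1, z2⟩ := H01.zero (by omega)
      obtain ⟨z3, z4⟩ := H23.zero (by omega)
      obtain ⟨z5, z6⟩ := H45.zero (by omega)
      right
      refine ⟨x₂, x₄, ?_⟩
      simp only [Prod.mk.injEq, true_and]
      omega
  · have key : ∀ u v : ℤ × ℤ, u.1 + u.2 - (v.1 + v.2) = -1 ∨
        u.1 + u.2 - (v.1 + v.2) = -2 ∨ (u.1 - v.1 = -1 ∧ u.2 - v.2 = 1) ∨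
        (u.1 - v.1 = -3 ∧ u.2 - v.2 = 0) → P₂ (u - v) := by
      rintro ⟨a, b⟩ ⟨c, d⟩ hx
      simp only [P₂, Prod.mk_sub_mk, Prod.mk.injEq]
      omega
    rintro (⟨a, b, hab⟩ | ⟨a, b, hab⟩) <;>
      simp only [Prod.mk.injEq] at hab <;>
      obtain ⟨⟨e1, e2⟩, ⟨e3, e4⟩, ⟨e5, e6⟩, ⟨e7, e8⟩, e9, e10⟩ := hab
    · subst e1 e2 e3 e4 e5 e6 e7 e8 e9 e10
      intro i j hij
      fin_cases i <;> fin_cases j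
      · exact absurd hij (by decide)
      · exact absurd hij (by decide)
      · exact absurd hij (by decide)
      · exact absurd hij (by decide)
      · exact absurd hij (by decide)
      · exact absurd hij (by decide)
      · exact key ((0:ℤ),(0:ℤ)) (x₁, 1-x₁) (by omega)
      · exact absurd hij (by decide)
      · exact absurd hij (by decide)
      · exact absurd hij (by decide)
      · exact absurd hij (by decide)
      · exact absurd hij (by decide)
      · exact key ((0:ℤ),(0:ℤ)) (x₁+1, -x₁) (by omega)
      · exact key (x₁, 1-x₁) (x₁+1, -x₁) (by omega)
      · exact absurd hij (by decide)
      · exact absurd hij (by decide)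
      · exact absurd hij (by decide)
      · exact absurd hij (by decide)
      · exact key ((0:ℤ),(0:ℤ)) (x₃, 2-x₃) (by omega)
      · exact key (x₁, 1-x₁) (x₃, 2-x₃) (by omega)
      · exact key (x₁+1, -x₁) (x₃, 2-x₃) (by omega)
      · exact absurd hij (by decide)
      · exact absurd hij (by decide)
      · exact absurd hij (by decide)
      · exact key ((0:ℤ),(0:ℤ)) (x₃+1, 1-x₃) (by omega)
      · exact key (x₁, 1-x₁) (x₃+1, 1-x₃) (by omega)
      · exact key (x₁+1, -x₁) (x₃+1, 1-x₃) (by omega)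
      · exact key (x₃, 2-x₃) (x₃+1, 1-x₃) (by omega)
      · exact absurd hij (by decide)
      · exact absurd hij (by decide)
      · exact key ((0:ℤ),(0:ℤ)) ((3:ℤ),(0:ℤ)) (by omega)
      · exact key (x₁, 1-x₁) ((3:ℤ),(0:ℤ)) (by omega)
      · exact key (x₁+1, -x₁) ((3:ℤ),(0:ℤ)) (by omega)
      · exact key (x₃, 2-x₃) ((3:ℤ),(0:ℤ)) (by omega)
      · exact key (x₃+1, 1-x₃) ((3:ℤ),(0:ℤ)) (by omega)
      · exact absurd hij (by decide)
    · subst e1 e2 e3 e4 e5 e6 e7 e8 e9 e10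
      intro i j hij
      fin_cases i <;> fin_cases j
      · exact absurd hij (by decide)
      · exact absurd hij (by decide)
      · exact absurd hij (by decide)
      · exact absurd hij (by decide)
      · exact absurd hij (by decide)
      · exact absurd hij (by decide)
      · exact key ((0:ℤ),(0:ℤ)) ((1:ℤ),(-1:ℤ)) (by omega)
      · exact absurd hij (by decide)
      · exact absurd hij (by decide)
      · exact absurd hij (by decide)
      · exact absurd hij (by decide)
      · exact absurd hij (by decide)
      · exact key ((0:ℤ),(0:ℤ)) (x₂, 1-x₂) (by omega)
      · exact key ((1:ℤ),(-1:ℤ)) (x₂, 1-x₂) (by omega)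
      · exact absurd hij (by decide)
      · exact absurd hij (by decide)
      · exact absurd hij (by decide)
      · exact absurd hij (by decide)
      · exact key ((0:ℤ),(0:ℤ)) (x₂+1, -x₂) (by omega)
      · exact key ((1:ℤ),(-1:ℤ)) (x₂+1, -x₂) (by omega)
      · exact key (x₂, 1-x₂) (x₂+1, -x₂) (by omega)
      · exact absurd hij (by decide)
      · exact absurd hij (by decide)
      · exact absurd hij (by decide)
      · exact key ((0:ℤ),(0:ℤ)) (x₄, 2-x₄) (by omega)
      · exact key ((1:ℤ),(-1:ℤ)) (x₄, 2-x₄) (by omega)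
      · exact key (x₂, 1-x₂) (x₄, 2-x₄) (by omega)
      · exact key (x₂+1, -x₂) (x₄, 2-x₄) (by omega)
      · exact absurd hij (by decide)
      · exact absurd hij (by decide)
      · exact key ((0:ℤ),(0:ℤ)) (x₄+1, 1-x₄) (by omega)
      · exact key ((1:ℤ),(-1:ℤ)) (x₄+1, 1-x₄) (by omega)
      · exact key (x₂, 1-x₂) (x₄+1, 1-x₄) (by omega)
      · exact key (x₂+1, -x₂) (x₄+1, 1-x₄) (by omega)
      · exact key (x₄, 2-x₄) (x₄+1, 1-x₄) (by omega)
      · exact absurd hij (by decide)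
end

section
/- Let a, b be integers and let f(a,b) = a² + 5a + 6 − 2ab − 5b² + b. Then the three conditions (i) a < 0 or a + 2b < 0, (ii) a > −4 or a + 2b > −2, and (iii) (a+2b+1)·f(a,b) = 0 hold simultaneously if and only if one of the following holds: a + 2b = −1; or (a,b) is one of the eight pairs (−1,1), (−2,0), (−2,1), (−3,0), (−4,2), (−7,4), (0,−1), (3,−3); or a < −3, a + 2b > 3 and f(a,b) = 0; or a > −1, a + 2b < −3 and f(a,b) = 0. -/
/-- `f a b = a² + 5a + 6 − 2ab − 5b² + b`, so that
`χ(O_X(aH+bE)) = (a+2b+1) f(a,b) / 6` on the blow-up of `ℙ³` at a twisted cubic. -/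
def f (a b : ℤ) : ℤ := a ^ 2 + 5 * a + 6 - 2 * a * b - 5 * b ^ 2 + b

theorem stmt_7 (a b : ℤ) :
    ((a < 0 ∨ a + 2 * b < 0) ∧ (a > -4 ∨ a + 2 * b > -2) ∧
      (a + 2 * b + 1) * f a b = 0) ↔
      (a + 2 * b = -1 ∨
        ((a, b) = (-1, 1) ∨ (a, b) = (-2, 0) ∨ (a, b) = (-2, 1) ∨ (a, b) = (-3, 0) ∨
          (a, b) = (-4, 2) ∨ (a, b) = (-7, 4) ∨ (a, b) = (0, -1) ∨ (a, b) = (3, -3)) ∨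
        (a < -3 ∧ a + 2 * b > 3 ∧ f a b = 0) ∨
        (a > -1 ∧ a + 2 * b < -3 ∧ f a b = 0)) := by
  simp only [f, Prod.mk.injEq]
  constructor
  · rintro ⟨h1, h2, h3⟩
    rcases mul_eq_zero.1 h3 with hs | hf
    · left; omega
    by_cases hs1 : a + 2 * b = -1
    · left; exact hs1
    have hf' : a * a + 5 * a + 6 - 2 * a * b - 5 * (b * b) + b = 0 := by
      linear_combination hf
    by_cases hA : a < -3
    · by_cases hS : a + 2 * b > 3
      · right; right; left; exact ⟨hA, hS, hf⟩
      · have hs0 : 0 ≤ a + 2 * b := by omega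
        have hs3 : a + 2 * b ≤ 3 := by omega
        have hb2 : 2 ≤ b := by omega
        have hb9 : b ≤ 9 := by nlinarith [mul_nonneg (by omega : (0:ℤ) ≤ 3 - (a + 2*b)) (by omega : (0:ℤ) ≤ b)]
        have ha_lb : -18 ≤ a := by omega
        have ha_ub : a ≤ -4 := by omega
        right; left
        interval_cases b <;> interval_cases a <;> omega
    · by_cases hA2 : a > -1
      · have hs0 : a + 2 * b ≤ -2 := by omega
        by_cases hS : a + 2 * b < -3
        · right; right; right; exact ⟨hA2, hS, hf⟩
        · have hs3 : -3 ≤ a + 2 * b := by omega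
          have hb1 : b ≤ -1 := by omega
          have hb3 : -3 ≤ b := by nlinarith [mul_nonneg (by omega : (0:ℤ) ≤ (a + 2*b) + 3) (by omega : (0:ℤ) ≤ -b)]
          have ha_lb : 0 ≤ a := by omega
          have ha_ub : a ≤ 4 := by omega
          right; left
          interval_cases b <;> interval_cases a <;> omega
      · have ha1 : -3 ≤ a := by omega
        have ha2 : a ≤ -1 := by omega
        have hb1 : -2 ≤ b := by nlinarith
        have hb2 : b ≤ 2 := by nlinarith
        right; left
        interval_cases a <;> interval_cases b <;> omega
  · rintro (hs | (⟨h,h'⟩|⟨h,h'⟩|⟨h,h'⟩|⟨h,h'⟩|⟨h,h'⟩|⟨h,h'⟩|⟨h,h'⟩|⟨h,h'⟩) | ⟨hA,hS,hf⟩ | ⟨hA,hS,hf⟩) <;>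
      first
        | (subst h; subst h'; norm_num)
        | (refine ⟨by omega, by omega, ?_⟩;
            first
              | (exact mul_eq_zero.2 (Or.inr hf))
              | (have h0 : a + 2 * b + 1 = 0 := by omega
                 rw [h0, zero_mul]))
end

section
/- Let f(a,b) = a² + 5a + 6 − 2ab − 5b² + b and g(a,b) = (a+2b+1)·f(a,b). If integers a₁, b₁, a₂, b₂, a₃, b₃ satisfy f(−a₁,−b₁) = f(−a₂,−b₂) = f(−a₃,−b₃) = 0 and g(a₁−a₂, b₁−b₂) = g(a₁−a₃, b₁−b₃) = g(a₂−a₃, b₂−b₃) = 0, then (a₁,b₁,a₂,b₂,a₃,b₃) is one of the four tuples (0,1,2,0,−3,3), (0,1,2,0,3,0), (1,−1,2,−1,4,−2), (7,−4,2,−1,4,−2). -/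
/-- `g a b = (a + 2b + 1) · f a b`, six times the Euler characteristic of
`O_X(aH+bE)` on the blow-up of `ℙ³` at a twisted cubic curve. -/
def g (a b : ℤ) : ℤ := (a + 2 * b + 1) * f a b

def PellSol (m r : ℤ) : Prop := 8 * m ^ 2 - 3 * r ^ 2 = 5

theorem pellSol_of_f_eq_zero {x y : ℤ} (h : f x y = 0) :
    PellSol (1 + x + 2 * y) (3 + 2 * x + 2 * y) := by
  unfold PellSol f at *
  linear_combination (-4) * h

namespace PellSol

variable {m r m' r' : ℤ}

theorem neg (h : PellSol m r) : PellSol (-m) (-r) := by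
  simpa only [PellSol, neg_sq] using h

theorem natAbs (h : PellSol m r) : PellSol m.natAbs r.natAbs := by
  simpa only [PellSol, Int.natCast_natAbs, sq_abs] using h

theorem eq_one_one_or_eq_two_three (h : PellSol m r) (hm : 0 ≤ m) (hm7 : m ≤ 7) (hr : 0 ≤ r) :
    (m = 1 ∧ r = 1) ∨ (m = 2 ∧ r = 3) := by
  unfold PellSol at h
  have hr11 : r ≤ 11 := by nlinarith
  interval_cases m <;> interval_cases r <;> omega

theorem natAbs_eq_of_natAbs_le_seven (h : PellSol m r) (hm : m.natAbs ≤ 7) :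
    (m.natAbs = 1 ∧ r.natAbs = 1) ∨ (m.natAbs = 2 ∧ r.natAbs = 3) := by
  have := h.natAbs.eq_one_one_or_eq_two_three (by omega) (by omega) (by omega)
  omega

theorem natAbs_eq_natAbs (h : PellSol m r) (h' : PellSol m' r') (hm : m.natAbs = m'.natAbs) :
    r.natAbs = r'.natAbs := by
  unfold PellSol at h h'
  rw [Int.natAbs_eq_iff_sq_eq] at hm ⊢
  linarith

theorem sq_lorentz (h : PellSol m r) (h' : PellSol m' r') :
    (8 * m * m' - 3 * r * r') ^ 2 = 25 + 24 * (m * r' - m' * r) ^ 2 := by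
  unfold PellSol at h h'
  linear_combination (8 * m' ^ 2 - 3 * r' ^ 2) * h + 5 * h'

theorem sq_three_mul_mul (h : PellSol m r) (h' : PellSol m' r') :
    (3 * r * r') ^ 2 = (8 * m ^ 2 - 5) * (8 * m' ^ 2 - 5) := by
  unfold PellSol at h h'
  linear_combination (-(3 * r' ^ 2)) * h - (8 * m ^ 2 - 5) * h'

theorem seven_le_lorentz (h : PellSol m r) (h' : PellSol m' r') (hm : 0 ≤ m) (hlt : m < m') :
    7 ≤ 8 * m * m' - 3 * r * r' := by
  have hB := sq_lorentz h h'
  have hprod := sq_three_mul_mul h h'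
  unfold PellSol at h h'
  have hd : m * r' - m' * r ≠ 0 := by
    intro hd
    have : 5 * (m' ^ 2 - m ^ 2) = 3 * (m * r' - m' * r) * (m * r' + m' * r) := by
      linear_combination m ^ 2 * h' - m' ^ 2 * h
    rw [hd] at this
    nlinarith
  have hd2 : 1 ≤ (m * r' - m' * r) ^ 2 := by
    have := sq_pos_of_ne_zero hd
    omega
  have hm1 : 1 ≤ m := by nlinarith
  have hpos : 3 * r * r' < 8 * m * m' := by
    have : (3 * r * r') ^ 2 < (8 * m * m') ^ 2 := by nlinarith
    exact lt_of_pow_lt_pow_left₀ 2 (by nlinarith) this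
  nlinarith

theorem gap_of_nonneg (h : PellSol m r) (h' : PellSol m' r') (hm : 0 ≤ m) (hr : 0 ≤ r)
    (hr' : 0 ≤ r') (hlt : m < m') : (m = 1 ∧ m' = 2) ∨ 2 * m + 3 ≤ m' := by
  rcases le_or_gt m 7 with hm7 | hm7
  · have hsmall := h.eq_one_one_or_eq_two_three hm hm7 hr
    rcases le_or_gt m' 7 with hm'7 | hm'7
    · have := h'.eq_one_one_or_eq_two_three (by omega) hm'7 hr'
      omega
    · omega
  · have hB := seven_le_lorentz h h' hm hlt
    have hprod := sq_three_mul_mul h h'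
    have hquad : 0 ≤ 5 * m ^ 2 + 5 * m' ^ 2 - 14 * m * m' + 3 := by
      have hle : 3 * r * r' ≤ 8 * m * m' - 7 := by linarith
      have := pow_le_pow_left₀ (by positivity) hle 2
      nlinarith
    right
    by_contra! hle
    nlinarith

theorem natAbs_gap (h : PellSol m r) (h' : PellSol m' r') (hlt : m.natAbs < m'.natAbs) :
    (m.natAbs = 1 ∧ m'.natAbs = 2) ∨ 2 * m.natAbs + 3 ≤ m'.natAbs := by
  have := h.natAbs.gap_of_nonneg h'.natAbs (by omega) (by omega) (by omega) (by omega)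
  omega

theorem natAbs_le_two_of_eq_add_one (h : PellSol m r) (h' : PellSol m' r') (hm : m = m' + 1) :
    m.natAbs ≤ 2 ∧ m'.natAbs ≤ 2 := by
  rcases lt_trichotomy m.natAbs m'.natAbs with hlt | heq | hgt
  · have := h.natAbs_gap h' hlt
    omega
  · omega
  · have := h'.natAbs_gap h hgt
    omega

theorem natAbs_le_two_of_add_eq {m₁ r₁ m₂ r₂ m₃ r₃ : ℤ} (h₁ : PellSol m₁ r₁) (h₂ : PellSol m₂ r₂)
    (h₃ : PellSol m₃ r₃) (hm : m₁ + m₂ + m₃ = 1) (hr : r₁ + r₂ + r₃ = 3) :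
    m₁.natAbs ≤ 2 ∧ m₂.natAbs ≤ 2 ∧ m₃.natAbs ≤ 2 := by
  wlog h21 : m₂.natAbs ≤ m₁.natAbs generalizing m₁ r₁ m₂ r₂ m₃ r₃
  · have := this h₂ h₁ h₃ (by omega) (by omega)
    omega
  wlog h31 : m₃.natAbs ≤ m₁.natAbs generalizing m₁ r₁ m₂ r₂ m₃ r₃
  · have := this h₃ h₂ h₁ (by omega) (by omega) (by omega) (by omega)
    omega
  wlog h32 : m₃.natAbs ≤ m₂.natAbs generalizing m₁ r₁ m₂ r₂ m₃ r₃
  · have := this h₁ h₃ h₂ (by omega) (by omega) (by omega) (by omega) (by omega)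
    omega
  suffices m₁.natAbs ≤ 2 by omega
  by_contra! hbig
  rcases h21.lt_or_eq with h21 | h21
  · have := h₂.natAbs_gap h₁ h21
    have := h₃.natAbs_gap h₁ (by omega)
    omega
  · have hr21 := h₂.natAbs_eq_natAbs h₁ h21
    -- `m₂ = m₁` would make `|m₃| = |1 - 2 m₁|` too large, so `m₂ = -m₁` and `m₃ = 1`
    have hm₃ : m₃ = 1 := by omega
    have hr₃ := h₃.natAbs_eq_of_natAbs_le_seven (by omega)
    have hr₁ : r₁ = 1 ∨ r₁ = 2 := by omega
    have hm₁ : 9 ≤ m₁ ^ 2 := by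
      rcases (by omega : 3 ≤ m₁ ∨ m₁ ≤ -3) with h | h <;> nlinarith
    unfold PellSol at h₁
    rcases hr₁ with rfl | rfl <;> linarith

end PellSol

theorem natAbs_le_two_of_g_eq_zero {a b a' b' : ℤ} (h : f (-a) (-b) = 0)
    (h' : f (-a') (-b') = 0) (hg : g (a - a') (b - b') = 0) :
    (a + 2 * b - 1).natAbs ≤ 2 ∧ (a' + 2 * b' - 1).natAbs ≤ 2 := by
  have P := pellSol_of_f_eq_zero h
  have P' := pellSol_of_f_eq_zero h'
  rcases mul_eq_zero.mp hg with hlin | hquad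
  · have := P.natAbs_le_two_of_eq_add_one P' (by omega)
    omega
  · have := P.natAbs_le_two_of_add_eq P'.neg (pellSol_of_f_eq_zero hquad) (by ring) (by ring)
    omega

def smallSolutions : List (ℤ × ℤ) :=
  [(-3, 3), (0, 1), (1, -1), (2, -1), (2, 0), (3, 0), (4, -2), (7, -4)]

theorem mem_smallSolutions {a b : ℤ} (h : f (-a) (-b) = 0) (hm : (a + 2 * b - 1).natAbs ≤ 2) :
    (a, b) ∈ smallSolutions := by
  have := (pellSol_of_f_eq_zero h).natAbs_eq_of_natAbs_le_seven (by omega)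
  simp only [smallSolutions, List.mem_cons, Prod.mk.injEq, List.not_mem_nil, or_false]
  obtain ⟨hm, hr⟩ | ⟨hm, hr⟩ := this <;>
    rcases Int.natAbs_eq_iff.mp hm with hm | hm <;>
    rcases Int.natAbs_eq_iff.mp hr with hr | hr <;>
    omega

theorem smallSolutions_triples :
    ∀ p ∈ smallSolutions, ∀ q ∈ smallSolutions, ∀ s ∈ smallSolutions,
      g (p.1 - q.1) (p.2 - q.2) = 0 → g (p.1 - s.1) (p.2 - s.2) = 0 →
      g (q.1 - s.1) (q.2 - s.2) = 0 →
      (p, q, s) = ((0, 1), (2, 0), (-3, 3)) ∨ (p, q, s) = ((0, 1), (2, 0), (3, 0)) ∨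
      (p, q, s) = ((1, -1), (2, -1), (4, -2)) ∨ (p, q, s) = ((7, -4), (2, -1), (4, -2)) := by
  decide

theorem stmt_8 (a₁ b₁ a₂ b₂ a₃ b₃ : ℤ)
    (h₁ : f (-a₁) (-b₁) = 0) (h₂ : f (-a₂) (-b₂) = 0) (h₃ : f (-a₃) (-b₃) = 0)
    (h₁₂ : g (a₁ - a₂) (b₁ - b₂) = 0) (h₁₃ : g (a₁ - a₃) (b₁ - b₃) = 0)
    (h₂₃ : g (a₂ - a₃) (b₂ - b₃) = 0) :
    (a₁, b₁, a₂, b₂, a₃, b₃) = (0, 1, 2, 0, -3, 3) ∨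
    (a₁, b₁, a₂, b₂, a₃, b₃) = (0, 1, 2, 0, 3, 0) ∨
    (a₁, b₁, a₂, b₂, a₃, b₃) = (1, -1, 2, -1, 4, -2) ∨
    (a₁, b₁, a₂, b₂, a₃, b₃) = (7, -4, 2, -1, 4, -2) := by
  have hD₁ := mem_smallSolutions h₁ (natAbs_le_two_of_g_eq_zero h₁ h₂ h₁₂).1
  have hD₂ := mem_smallSolutions h₂ (natAbs_le_two_of_g_eq_zero h₁ h₂ h₁₂).2
  have hD₃ := mem_smallSolutions h₃ (natAbs_le_two_of_g_eq_zero h₁ h₃ h₁₃).2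
  simpa only [Prod.mk.injEq, and_assoc] using
    smallSolutions_triples _ hD₁ _ hD₂ _ hD₃ h₁₂ h₁₃ h₂₃
end
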